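/- Let λ, μ ∈ ℂ with Re(λ) < 0 and Re(μ) < 0, and let ω > 0. Then the complex-valued integral (1/(2π)) · ∫_{ν ∈ [−ω, ω]} ((I·ν − λ) · (−I·ν − μ))⁻¹ dν = (1/π) · (atan(ω / λ) + atan(ω / μ)) / (λ + μ). -/

import Mathlib

open MeasureTheory Complex

/-- Principal-branch complex arctangent. -/
noncomputable def catan (z : ℂ) : ℂ :=
  (1 / (2 * Complex.I)) *
    (Complex.log (1 + Complex.I * z) - Complex.log (1 - Complex.I * z))

/-!
Both logarithms in `catan (ω / λ)` split as `log (± I ω - λ) - log (-λ)`, since all three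
arguments lie in the right half-plane; so `catan (ω / λ) = -½ ∫_{-ω}^{ω} dν / (I ν - λ)`,
`ν ↦ log (I ν - λ)` being an antiderivative of `I / (I ν - λ)` along the real line. The
integrand of the theorem splits into partial fractions of this shape, the second one after
the substitution `ν ↦ -ν`.
-/

theorem inv_mul_eq_inv_add_mul_inv_add_inv {K : Type*} [Field K] {a b : K} (ha : a ≠ 0)
    (hb : b ≠ 0) (hab : a + b ≠ 0) : (a * b)⁻¹ = (a + b)⁻¹ * (a⁻¹ + b⁻¹) := by
  field_simp
  ring

namespace Complex

theorem log_div_of_re_pos {u w : ℂ} (hu : 0 < u.re) (hw : 0 < w.re) :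
    log (u / w) = log u - log w := by
  have hu0 : u ≠ 0 := fun h => by simp [h] at hu
  have hw0 : w ≠ 0 := fun h => by simp [h] at hw
  have hargu := abs_lt.1 (abs_arg_lt_pi_div_two_iff.2 (Or.inl hu))
  have hargw := abs_lt.1 (abs_arg_lt_pi_div_two_iff.2 (Or.inl hw))
  have hwπ : arg w ≠ Real.pi := by linarith [hargw.2, Real.pi_pos]
  rw [div_eq_mul_inv, (log_mul_eq_add_log_iff hu0 (inv_ne_zero hw0)).2, log_inv w hwπ,
    sub_eq_add_neg]
  rw [arg_inv, if_neg hwπ]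
  constructor <;> linarith [hargu.1, hargu.2, hargw.1, hargw.2]

variable {lam : ℂ}

theorem re_I_mul_ofReal_sub_pos (hlam : lam.re < 0) (x : ℝ) : 0 < (I * x - lam).re := by
  simpa using hlam

theorem I_mul_ofReal_sub_ne_zero (hlam : lam.re < 0) (x : ℝ) : I * x - lam ≠ 0 :=
  fun h => by simpa [h] using re_I_mul_ofReal_sub_pos hlam x

theorem catan_ofReal_div_of_re_neg (hlam : lam.re < 0) (x : ℝ) :
    catan (x / lam) = I / 2 * (log (I * x - lam) - log (I * (-x : ℝ) - lam)) := by
  have hlam0 : lam ≠ 0 := fun h => by simp [h] at hlam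
  have hneg : 0 < (-lam).re := by simpa using hlam
  have hplus : 1 + I * (x / lam) = (I * (-x : ℝ) - lam) / -lam := by
    push_cast; field_simp; ring
  have hminus : 1 - I * (x / lam) = (I * x - lam) / -lam := by
    field_simp; ring
  rw [catan, hplus, hminus, log_div_of_re_pos (re_I_mul_ofReal_sub_pos hlam _) hneg,
    log_div_of_re_pos (re_I_mul_ofReal_sub_pos hlam _) hneg]
  field_simp
  rw [I_sq]
  ring

theorem continuous_inv_I_mul_ofReal_sub (hlam : lam.re < 0) :
    Continuous fun t : ℝ => (I * t - lam)⁻¹ :=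
  (by fun_prop : Continuous fun t : ℝ => I * t - lam).inv₀ (I_mul_ofReal_sub_ne_zero hlam)

theorem hasDerivAt_log_I_mul_ofReal_sub (hlam : lam.re < 0) (x : ℝ) :
    HasDerivAt (fun t : ℝ => log (I * t - lam)) (I / (I * x - lam)) x := by
  have hlin : HasDerivAt (fun t : ℝ => I * t - lam) I x := by
    simpa using (ofRealCLM.hasDerivAt.const_mul I).sub_const lam
  simpa using hlin.clog_real (mem_slitPlane_iff.2 (Or.inl (re_I_mul_ofReal_sub_pos hlam x)))

theorem integral_inv_I_mul_ofReal_sub (hlam : lam.re < 0) (a b : ℝ) :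
    ∫ t in a..b, (I * t - lam)⁻¹ = -I * (log (I * b - lam) - log (I * a - lam)) := by
  have hderiv (t : ℝ) : HasDerivAt (fun t : ℝ => -I * log (I * t - lam)) (I * t - lam)⁻¹ t :=
    ((hasDerivAt_log_I_mul_ofReal_sub hlam t).const_mul (-I)).congr_deriv (by
      rw [← mul_div_assoc, neg_mul, I_mul_I, neg_neg, one_div])
  rw [intervalIntegral.integral_eq_sub_of_hasDerivAt (fun t _ => hderiv t)
    ((continuous_inv_I_mul_ofReal_sub hlam).intervalIntegrable a b)]
  ring

theorem catan_ofReal_div_eq_integral (hlam : lam.re < 0) (x : ℝ) :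
    catan (x / lam) = -(1 / 2) * ∫ t in (-x)..x, (I * t - lam)⁻¹ := by
  rw [catan_ofReal_div_of_re_neg hlam, integral_inv_I_mul_ofReal_sub hlam]
  ring

end Complex

theorem freq_limited_H2_cross_term_integral_general
    (lam mu : ℂ) (hlam : lam.re < 0) (hmu : mu.re < 0) (ω : ℝ) :
    (1 / (2 * (Real.pi : ℂ))) *
        (∫ ν in (-ω)..ω,
          ((Complex.I * (ν : ℂ) - lam) * (-(Complex.I * (ν : ℂ)) - mu))⁻¹) =
      (1 / (Real.pi : ℂ)) * (catan ((ω : ℂ) / lam) + catan ((ω : ℂ) / mu)) / (lam + mu) := by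
  have hsum : lam + mu ≠ 0 := fun h => by
    have := congrArg re h
    simp only [add_re, zero_re] at this
    linarith
  have hsplit (ν : ℝ) : ((I * ν - lam) * (-(I * ν) - mu))⁻¹ =
      -(lam + mu)⁻¹ * ((I * ν - lam)⁻¹ + (I * (-ν : ℝ) - mu)⁻¹) := by
    have hreflect : -(I * ν) - mu = I * (-ν : ℝ) - mu := by push_cast; ring
    have hdenom : I * ν - lam + (I * (-ν : ℝ) - mu) = -(lam + mu) := by push_cast; ring
    rw [hreflect, inv_mul_eq_inv_add_mul_inv_add_inv (I_mul_ofReal_sub_ne_zero hlam _)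
      (I_mul_ofReal_sub_ne_zero hmu _) (hdenom ▸ neg_ne_zero.2 hsum), hdenom, inv_neg]
  have hreflected : IntervalIntegrable (fun t : ℝ => (I * (-t : ℝ) - mu)⁻¹) volume (-ω) ω :=
    ((continuous_inv_I_mul_ofReal_sub hmu).comp continuous_neg).intervalIntegrable _ _
  simp_rw [hsplit]
  rw [intervalIntegral.integral_const_mul, intervalIntegral.integral_add
    ((continuous_inv_I_mul_ofReal_sub hlam).intervalIntegrable _ _) hreflected,
    intervalIntegral.integral_comp_neg (fun t : ℝ => (I * t - mu)⁻¹), neg_neg,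
    catan_ofReal_div_eq_integral hlam, catan_ofReal_div_eq_integral hmu]
  field_simp
  ring

theorem freq_limited_H2_cross_term_integral
    (lam mu : ℂ) (hlam : lam.re < 0) (hmu : mu.re < 0) (ω : ℝ) (hω : 0 < ω) :
    (1 / (2 * (Real.pi : ℂ))) *
        (∫ ν in (-ω)..ω,
          ((Complex.I * (ν : ℂ) - lam) * (-(Complex.I * (ν : ℂ)) - mu))⁻¹) =
      (1 / (Real.pi : ℂ)) * (catan ((ω : ℂ) / lam) + catan ((ω : ℂ) / mu)) / (lam + mu) :=
  freq_limited_H2_cross_term_integral_general lam mu hlam hmu ω
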